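/- For real numbers λ₁,λ₂,λ₃, the 9×9 matrix I₃ ⊗ I₃ + (3/2)·(λ₁²·J₁⊗J₁ − λ₂²·J₂⊗J₂ + λ₃²·J₃⊗J₃) is positive semidefinite if and only if 4 − 9(λ₁⁴ + λ₂⁴ + λ₃⁴) + 27·λ₁²λ₂²λ₃² ≥ 0 and λᵢ² ≤ 2/3 for each i ∈ {1,2,3}. (This matrix is 9 times the Choi matrix of Φ∘Φ for the spin-1 polarization-scaling map Φ, so this characterizes complete positivity of Φ².) -/

import Mathlib

/-!
In the basis `|i⟩ ⊗ |j⟩` the matrix preserves the parity of `i + j`. Writing `a, b, c` for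
`3/2 λ₁², 3/2 λ₂², 3/2 λ₃²`, its odd block has eigenvalues `1 ± a`, `1 ± b`; its even block has
eigenvalues `1 ± c` on `|00⟩ - |22⟩` and `|02⟩ - |20⟩`, and is otherwise a `3 × 3` block on
`|00⟩ + |22⟩`, `|02⟩ + |20⟩`, `|11⟩` of determinant `4 (1 - a² - b² - c² + 2abc)`. Positivity of
the quadratic form follows by completing the square in the `|11⟩` coordinate; conversely each
condition is read off from a test vector or from the determinant of the `3 × 3` block.
-/

open Matrix Kronecker
open scoped ComplexOrder

/-- The spin-1 angular momentum matrix J₁. -/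
noncomputable def spinOneJ1 : Matrix (Fin 3) (Fin 3) ℂ :=
  ((1 / Real.sqrt 2 : ℝ) : ℂ) • !![0, 1, 0; 1, 0, 1; 0, 1, 0]

/-- The spin-1 angular momentum matrix J₂. -/
noncomputable def spinOneJ2 : Matrix (Fin 3) (Fin 3) ℂ :=
  ((1 / Real.sqrt 2 : ℝ) : ℂ) • !![0, -Complex.I, 0; Complex.I, 0, -Complex.I; 0, Complex.I, 0]

/-- The spin-1 angular momentum matrix J₃. -/
def spinOneJ3 : Matrix (Fin 3) (Fin 3) ℂ := !![1, 0, 0; 0, 0, 0; 0, 0, -1]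

open scoped RealInnerProductSpace

section QuadraticForms

variable {E : Type*} [NormedAddCommGroup E] [InnerProductSpace ℝ E]

lemma two_mul_inner_le_of_sq_le_mul {A B m : ℝ} (hA : 0 ≤ A) (hB : 0 ≤ B) (hm : m ^ 2 ≤ A * B)
    (u v : E) : 2 * m * ⟪u, v⟫ ≤ A * ‖u‖ ^ 2 + B * ‖v‖ ^ 2 := by
  have hinner : m * ⟪u, v⟫ ≤ |m| * (‖u‖ * ‖v‖) :=
    calc m * ⟪u, v⟫ ≤ |m * ⟪u, v⟫| := le_abs_self _
      _ = |m| * |⟪u, v⟫| := abs_mul _ _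
      _ ≤ |m| * (‖u‖ * ‖v‖) := by gcongr; exact abs_real_inner_le_norm u v
  have hamgm : 2 * |m| * (‖u‖ * ‖v‖) ≤ A * ‖u‖ ^ 2 + B * ‖v‖ ^ 2 := by
    refine (pow_le_pow_iff_left₀ (by positivity) (by positivity) two_ne_zero).mp ?_
    have hm' : |m| ^ 2 * (‖u‖ ^ 2 * ‖v‖ ^ 2) ≤ A * B * (‖u‖ ^ 2 * ‖v‖ ^ 2) := by
      rw [sq_abs]; gcongr
    nlinarith [sq_nonneg (A * ‖u‖ ^ 2 - B * ‖v‖ ^ 2)]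
  linarith

/-- The quadratic form of `spinOneChoiMatrix a b c` on the coordinates `(01, 10, 12, 21)`. -/
def oddForm (a b : ℝ) (p q r s : E) : ℝ :=
  ‖p‖ ^ 2 + ‖q‖ ^ 2 + ‖r‖ ^ 2 + ‖s‖ ^ 2 + (a + b) * (⟪p, r⟫ + ⟪q, s⟫) + (a - b) * (⟪p, q⟫ + ⟪r, s⟫)

/-- The quadratic form of `spinOneChoiMatrix a b c` on the coordinates `(00, 22, 02, 20, 11)`. -/
def evenForm (a b c : ℝ) (x y z t w : E) : ℝ :=
  (1 + c) * (‖x‖ ^ 2 + ‖y‖ ^ 2) + (1 - c) * (‖z‖ ^ 2 + ‖t‖ ^ 2) + ‖w‖ ^ 2 +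
    (a + b) * ⟪x + y, w⟫ + (a - b) * ⟪z + t, w⟫

lemma four_mul_oddForm (a b : ℝ) (p q r s : E) :
    4 * oddForm a b p q r s = (1 + a) * ‖p + q + r + s‖ ^ 2 + (1 - a) * ‖p - q - r + s‖ ^ 2 +
      (1 + b) * ‖p - q + r - s‖ ^ 2 + (1 - b) * ‖p + q - r - s‖ ^ 2 := by
  simp only [oddForm, ← real_inner_self_eq_norm_sq, inner_add_left, inner_add_right,
    inner_sub_left, inner_sub_right, real_inner_comm q p, real_inner_comm r p, real_inner_comm s p,
    real_inner_comm r q, real_inner_comm s q, real_inner_comm s r]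
  ring

lemma evenForm_eq (a b c : ℝ) (x y z t w : E) :
    evenForm a b c x y z t w = (1 + c) / 2 * ‖x - y‖ ^ 2 + (1 - c) / 2 * ‖z - t‖ ^ 2 +
      ‖w + ((a + b) / 2) • (x + y) + ((a - b) / 2) • (z + t)‖ ^ 2 +
      (((1 + c) / 2 - ((a + b) / 2) ^ 2) * ‖x + y‖ ^ 2 +
        ((1 - c) / 2 - ((a - b) / 2) ^ 2) * ‖z + t‖ ^ 2 -
        2 * ((a + b) / 2 * ((a - b) / 2)) * ⟪x + y, z + t⟫) := by
  simp only [evenForm, ← real_inner_self_eq_norm_sq, inner_add_left, inner_add_right,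
    inner_sub_left, inner_sub_right, real_inner_smul_left, real_inner_smul_right,
    real_inner_comm x w, real_inner_comm y w, real_inner_comm z w, real_inner_comm t w,
    real_inner_comm y x, real_inner_comm z x, real_inner_comm t x, real_inner_comm z y,
    real_inner_comm t y, real_inner_comm t z]
  ring

variable {a b c : ℝ}

lemma oddForm_nonneg (ha : a ^ 2 ≤ 1) (hb : b ^ 2 ≤ 1) (p q r s : E) :
    0 ≤ oddForm a b p q r s := by
  obtain ⟨ha₁, ha₂⟩ := abs_le.mp ((sq_le_one_iff_abs_le_one a).mp ha)
  obtain ⟨hb₁, hb₂⟩ := abs_le.mp ((sq_le_one_iff_abs_le_one b).mp hb)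
  have h := four_mul_oddForm a b p q r s
  have := mul_nonneg (neg_le_iff_add_nonneg'.mp ha₁) (sq_nonneg ‖p + q + r + s‖)
  have := mul_nonneg (sub_nonneg.mpr ha₂) (sq_nonneg ‖p - q - r + s‖)
  have := mul_nonneg (neg_le_iff_add_nonneg'.mp hb₁) (sq_nonneg ‖p - q + r - s‖)
  have := mul_nonneg (sub_nonneg.mpr hb₂) (sq_nonneg ‖p + q - r - s‖)
  linarith

lemma evenForm_nonneg (ha : a ^ 2 ≤ 1) (hb : b ^ 2 ≤ 1) (hc : c ^ 2 ≤ 1)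
    (hD : 0 ≤ 1 - a ^ 2 - b ^ 2 - c ^ 2 + 2 * a * b * c) (x y z t w : E) :
    0 ≤ evenForm a b c x y z t w := by
  rw [evenForm_eq]
  obtain ⟨hc₁, hc₂⟩ := abs_le.mp ((sq_le_one_iff_abs_le_one c).mp hc)
  set A := (1 + c) / 2 - ((a + b) / 2) ^ 2
  set B := (1 - c) / 2 - ((a - b) / 2) ^ 2
  set m := (a + b) / 2 * ((a - b) / 2)
  have hm : m ^ 2 ≤ A * B := by
    have : A * B - m ^ 2 = (1 - a ^ 2 - b ^ 2 - c ^ 2 + 2 * a * b * c) / 4 := by ring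
    linarith
  have hsum : A + B = 1 - (a ^ 2 + b ^ 2) / 2 := by ring
  have hA : 0 ≤ A := by nlinarith [sq_nonneg m]
  have hB : 0 ≤ B := by nlinarith [sq_nonneg m]
  have := two_mul_inner_le_of_sq_le_mul hA hB hm (x + y) (z + t)
  have := mul_nonneg (by linarith : 0 ≤ (1 + c) / 2) (sq_nonneg ‖x - y‖)
  have := mul_nonneg (by linarith : 0 ≤ (1 - c) / 2) (sq_nonneg ‖z - t‖)
  nlinarith [sq_nonneg ‖w + ((a + b) / 2) • (x + y) + ((a - b) / 2) • (z + t)‖]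

variable [Nontrivial E]

lemma sq_le_one_of_oddForm_nonneg (h : ∀ p q r s : E, 0 ≤ oddForm a b p q r s) :
    a ^ 2 ≤ 1 ∧ b ^ 2 ≤ 1 := by
  obtain ⟨e, he⟩ := exists_norm_eq E zero_le_one
  have heval : ∀ α β γ δ : ℝ, oddForm a b (α • e) (β • e) (γ • e) (δ • e) =
      α ^ 2 + β ^ 2 + γ ^ 2 + δ ^ 2 + (a + b) * (α * γ + β * δ) + (a - b) * (α * β + γ * δ) := by
    intro α β γ δ
    simp [oddForm, norm_smul, real_inner_smul_left, real_inner_smul_right, he]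
    ring
  have h₁ := heval 1 1 1 1 ▸ h _ _ _ _
  have h₂ := heval 1 (-1) (-1) 1 ▸ h _ _ _ _
  have h₃ := heval 1 (-1) 1 (-1) ▸ h _ _ _ _
  have h₄ := heval 1 1 (-1) (-1) ▸ h _ _ _ _
  constructor <;> rw [sq_le_one_iff_abs_le_one, abs_le] <;> constructor <;> linarith

lemma sq_le_one_and_det_nonneg_of_evenForm_nonneg
    (h : ∀ x y z t w : E, 0 ≤ evenForm a b c x y z t w) :
    c ^ 2 ≤ 1 ∧ 0 ≤ 1 - a ^ 2 - b ^ 2 - c ^ 2 + 2 * a * b * c := by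
  obtain ⟨e, he⟩ := exists_norm_eq E zero_le_one
  -- `N` represents `evenForm a b c` on vectors `(y₀ e, y₀ e, y₁ e, y₁ e, y₂ e)`
  let N : Matrix (Fin 3) (Fin 3) ℝ :=
    !![2 * (1 + c), 0, a + b; 0, 2 * (1 - c), a - b; a + b, a - b, 1]
  have hN : N.PosSemidef := by
    refine .of_dotProduct_mulVec_nonneg (by ext i j; fin_cases i <;> fin_cases j <;> rfl)
      fun y ↦ ?_
    have hy : evenForm a b c (y 0 • e) (y 0 • e) (y 1 • e) (y 1 • e) (y 2 • e) =
        star y ⬝ᵥ (N *ᵥ y) := by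
      simp [N, evenForm, dotProduct, mulVec, Fin.sum_univ_three, norm_smul, real_inner_smul_left,
        real_inner_smul_right, he, inner_add_left]
      ring
    exact hy ▸ h _ _ _ _ _
  have h₁ : 0 ≤ N 0 0 := hN.diag_nonneg
  have h₂ : 0 ≤ N 1 1 := hN.diag_nonneg
  have h₃ : 0 ≤ N.det := hN.det_nonneg
  simp [N, det_fin_three] at h₁ h₂ h₃
  exact ⟨by rw [sq_le_one_iff_abs_le_one, abs_le]; constructor <;> linarith, by linarith⟩

end QuadraticForms

lemma Matrix.IsHermitian.kronecker {R m n : Type*} [CommSemiring R] [StarRing R]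
    {A : Matrix m m R} {B : Matrix n n R} (hA : A.IsHermitian) (hB : B.IsHermitian) :
    (A ⊗ₖ B).IsHermitian := by
  rw [IsHermitian, conjTranspose_kronecker, hA.eq, hB.eq]

lemma spinOneJ1_isHermitian : spinOneJ1.IsHermitian := by
  ext i j; fin_cases i <;> fin_cases j <;> simp [spinOneJ1]

lemma spinOneJ2_isHermitian : spinOneJ2.IsHermitian := by
  ext i j; fin_cases i <;> fin_cases j <;> simp [spinOneJ2]

lemma spinOneJ3_isHermitian : spinOneJ3.IsHermitian := by
  ext i j; fin_cases i <;> fin_cases j <;> simp [spinOneJ3]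

/-- For `tᵢ = 2/3 aᵢ` this is nine times the Choi matrix of the spin-1 polarization-scaling map
with factors `t₁, t₂, t₃` (the sign of the `J₂` term comes from `J₂ᵀ = -J₂`). -/
noncomputable def spinOneChoiMatrix (a b c : ℝ) : Matrix (Fin 3 × Fin 3) (Fin 3 × Fin 3) ℂ :=
  1 + a • spinOneJ1 ⊗ₖ spinOneJ1 - b • spinOneJ2 ⊗ₖ spinOneJ2 + c • spinOneJ3 ⊗ₖ spinOneJ3

lemma spinOneChoiMatrix_mul (s t₁ t₂ t₃ : ℝ) :
    spinOneChoiMatrix (s * t₁) (s * t₂) (s * t₃) =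
      (1 : Matrix (Fin 3) (Fin 3) ℂ) ⊗ₖ (1 : Matrix (Fin 3) (Fin 3) ℂ) +
        (s : ℂ) • ((t₁ : ℂ) • (spinOneJ1 ⊗ₖ spinOneJ1) - (t₂ : ℂ) • (spinOneJ2 ⊗ₖ spinOneJ2) +
          (t₃ : ℂ) • (spinOneJ3 ⊗ₖ spinOneJ3)) := by
  simp only [spinOneChoiMatrix, one_kronecker_one, Complex.coe_smul, smul_add, smul_sub, smul_smul]
  abel

lemma spinOneChoiMatrix_isHermitian (a b c : ℝ) : (spinOneChoiMatrix a b c).IsHermitian :=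
  ((isHermitian_one.add ((spinOneJ1_isHermitian.kronecker spinOneJ1_isHermitian).smul
    (IsSelfAdjoint.all a))).sub ((spinOneJ2_isHermitian.kronecker spinOneJ2_isHermitian).smul
    (IsSelfAdjoint.all b))).add ((spinOneJ3_isHermitian.kronecker spinOneJ3_isHermitian).smul
    (IsSelfAdjoint.all c))

lemma inv_sqrt_two_mul_self : ((1 / Real.sqrt 2 : ℝ) : ℂ) * ((1 / Real.sqrt 2 : ℝ) : ℂ) = 1 / 2 := by
  rw [← Complex.ofReal_mul, div_mul_div_comm, Real.mul_self_sqrt zero_le_two]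
  norm_num

lemma star_dotProduct_spinOneChoiMatrix_mulVec (a b c : ℝ) (x : Fin 3 × Fin 3 → ℂ) :
    star x ⬝ᵥ (spinOneChoiMatrix a b c *ᵥ x) =
      ↑(evenForm a b c (x (0, 0)) (x (2, 2)) (x (0, 2)) (x (2, 0)) (x (1, 1)) +
        oddForm a b (x (0, 1)) (x (1, 0)) (x (1, 2)) (x (2, 1))) := by
  simp only [spinOneChoiMatrix, spinOneJ1, spinOneJ2, smul_kronecker, kronecker_smul, smul_smul,
    inv_sqrt_two_mul_self]
  apply Complex.ext <;>
  · simp [evenForm, oddForm, dotProduct, mulVec, Fintype.sum_prod_type, Fin.sum_univ_three,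
      one_apply, spinOneJ3, Complex.sq_norm, Complex.normSq_apply, Complex.inner]
    ring

theorem spinOneChoiMatrix_posSemidef_iff (a b c : ℝ) :
    (spinOneChoiMatrix a b c).PosSemidef ↔
      0 ≤ 1 - a ^ 2 - b ^ 2 - c ^ 2 + 2 * a * b * c ∧ a ^ 2 ≤ 1 ∧ b ^ 2 ≤ 1 ∧ c ^ 2 ≤ 1 := by
  simp only [posSemidef_iff_dotProduct_mulVec, spinOneChoiMatrix_isHermitian, true_and,
    star_dotProduct_spinOneChoiMatrix_mulVec, Complex.zero_le_real]
  constructor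
  · intro h
    obtain ⟨ha, hb⟩ := sq_le_one_of_oddForm_nonneg fun p q r s : ℂ ↦ by
      simpa [evenForm] using h fun ij ↦ !![0, p, 0; q, 0, r; 0, s, 0] ij.1 ij.2
    obtain ⟨hc, hD⟩ := sq_le_one_and_det_nonneg_of_evenForm_nonneg (a := a) (b := b)
      fun x y z t w : ℂ ↦ by
        simpa [oddForm] using h fun ij ↦ !![x, 0, z; 0, w, 0; t, 0, y] ij.1 ij.2
    exact ⟨hD, ha, hb, hc⟩
  · rintro ⟨hD, ha, hb, hc⟩ x
    exact add_nonneg (evenForm_nonneg ha hb hc hD _ _ _ _ _) (oddForm_nonneg ha hb _ _ _ _)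

theorem qutrit_squared_choi_posSemidef_iff (l1 l2 l3 : ℝ) :
    ((1 : Matrix (Fin 3) (Fin 3) ℂ) ⊗ₖ (1 : Matrix (Fin 3) (Fin 3) ℂ) +
      ((3 / 2 : ℝ) : ℂ) • (((l1 ^ 2 : ℝ) : ℂ) • (spinOneJ1 ⊗ₖ spinOneJ1) -
        ((l2 ^ 2 : ℝ) : ℂ) • (spinOneJ2 ⊗ₖ spinOneJ2) +
        ((l3 ^ 2 : ℝ) : ℂ) • (spinOneJ3 ⊗ₖ spinOneJ3))).PosSemidef ↔
    (4 - 9 * (l1 ^ 4 + l2 ^ 4 + l3 ^ 4) + 27 * (l1 ^ 2 * l2 ^ 2 * l3 ^ 2) ≥ 0 ∧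
      l1 ^ 2 ≤ 2 / 3 ∧ l2 ^ 2 ≤ 2 / 3 ∧ l3 ^ 2 ≤ 2 / 3) := by
  have hsq (l : ℝ) : (3 / 2 * l ^ 2) ^ 2 ≤ 1 ↔ l ^ 2 ≤ 2 / 3 := by
    rw [sq_le_one_iff_abs_le_one, abs_of_nonneg (by positivity)]
    constructor <;> intro <;> linarith
  have hdet : 4 - 9 * (l1 ^ 4 + l2 ^ 4 + l3 ^ 4) + 27 * (l1 ^ 2 * l2 ^ 2 * l3 ^ 2) =
      4 * (1 - (3 / 2 * l1 ^ 2) ^ 2 - (3 / 2 * l2 ^ 2) ^ 2 - (3 / 2 * l3 ^ 2) ^ 2 +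
        2 * (3 / 2 * l1 ^ 2) * (3 / 2 * l2 ^ 2) * (3 / 2 * l3 ^ 2)) := by ring
  rw [← spinOneChoiMatrix_mul, spinOneChoiMatrix_posSemidef_iff, hsq, hsq, hsq, ge_iff_le, hdet,
    mul_nonneg_iff_of_pos_left four_pos]
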